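/- arXiv:math/0507065 — 3 statements merged into one kernel-verified Lean document; each statement's English description precedes it below -/
import Mathlib

section
/- For $x>0$, let $T_x$ be the weighted shift with weights $\alpha_0=\sqrt{1/2}$, $\alpha_1=\sqrt{x}$, $\alpha_n=\sqrt{\frac{n+1}{n+2}}$ for $n\ge 2$. Then $T_x$ is 2-hyponormal if and only if $\frac{63-\sqrt{129}}{80} \le x \le \frac{24}{35}$. -/
/-!
The moments of `T_x` are `γ₀ = 1`, `γ₁ = 1/2` and `γₙ = 3x / (2(n+1))` for `n ≥ 2`. Hence for
`n ≥ 2` the Hankel matrix `A(n;2)` is a positive multiple of the Hilbert-type matrix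
`(1 / (n+1+i+j))`, which is always positive semidefinite, and only `A(0;2)` and `A(1;2)` constrain
`x`. Each of these is positive semidefinite exactly when its determinant is nonnegative (the
leading minors are then positive), that is when `40x² - 63x + 24 ≤ 0`, resp. `x ≤ 24/35`.
-/

/-- The moments `γ n = α₀² ⋯ α_{n-1}²` of a weighted shift. -/
noncomputable def gam (α : ℕ → ℝ) (n : ℕ) : ℝ := ∏ k ∈ Finset.range n, α k ^ 2

/-- `W_α` is `k`-hyponormal iff all `(k+1) × (k+1)` Hankel moment matrices are PSD. -/
def KHyponormal (k : ℕ) (α : ℕ → ℝ) : Prop :=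
  ∀ n : ℕ, (Matrix.of fun i j : Fin (k + 1) => gam α (n + i + j)).PosSemidef

lemma gam_succ (α : ℕ → ℝ) (n : ℕ) : gam α (n + 1) = gam α n * α n ^ 2 :=
  Finset.prod_range_succ _ _

def hankelForm₃ (s : ℕ → ℝ) (a b c : ℝ) : ℝ :=
  s 0 * a ^ 2 + 2 * s 1 * a * b + s 2 * (2 * a * c + b ^ 2) + 2 * s 3 * b * c + s 4 * c ^ 2

lemma hankelForm₃_const_mul (r : ℝ) (s : ℕ → ℝ) (a b c : ℝ) :
    hankelForm₃ (fun k => r * s k) a b c = r * hankelForm₃ s a b c := by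
  unfold hankelForm₃; ring

lemma posSemidef_hankel_fin_three_iff (s : ℕ → ℝ) :
    (Matrix.of fun i j : Fin 3 => s (i + j)).PosSemidef ↔ ∀ a b c, 0 ≤ hankelForm₃ s a b c := by
  rw [Matrix.posSemidef_iff_dotProduct_mulVec]
  have hHerm : (Matrix.of fun i j : Fin 3 => s (i + j)).IsHermitian := by
    ext i j
    simp [add_comm]
  have hform (v : Fin 3 → ℝ) :
      star v ⬝ᵥ (Matrix.of fun i j : Fin 3 => s (i + j)).mulVec v =
        hankelForm₃ s (v 0) (v 1) (v 2) := by
    simp only [dotProduct, Pi.star_apply, star_trivial, Matrix.mulVec, Matrix.of_apply,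
      Fin.sum_univ_three, Fin.coe_ofNat_eq_mod, Nat.zero_mod, Nat.one_mod, Nat.mod_succ, add_zero,
      zero_add, Nat.reduceAdd, hankelForm₃]
    ring
  simp only [hHerm, hform, true_and]
  exact ⟨fun h a b c => h ![a, b, c], fun h v => h _ _ _⟩

lemma kHyponormal_two_iff (α : ℕ → ℝ) :
    KHyponormal 2 α ↔ ∀ n a b c, 0 ≤ hankelForm₃ (fun k => gam α (n + k)) a b c := by
  simp only [KHyponormal, add_assoc, ← posSemidef_hankel_fin_three_iff]

/-- The Hankel matrices `(1 / (N + i + j))` are Gram matrices of the monomials `t ^ i` for the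
measure `t ^ (N - 1) dt` on `[0, 1]`; the certificate below is their `LDLᵀ` decomposition. -/
lemma hankelForm₃_inv_nonneg {N : ℝ} (hN : 0 < N) (a b c : ℝ) :
    0 ≤ hankelForm₃ (fun k => 1 / (N + k)) a b c := by
  have hLDL : hankelForm₃ (fun k => 1 / (N + k)) a b c
      = ((N + 3) ^ 2 * (N + 4) * ((N + 1) * (N + 2) * a + N * (N + 2) * b + N * (N + 1) * c) ^ 2
         + N * (N + 2) * (N + 4) * ((N + 3) * b + 2 * (N + 1) * c) ^ 2
         + 4 * N * (N + 1) ^ 2 * c ^ 2)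
        / (N * (N + 1) ^ 2 * (N + 2) ^ 2 * (N + 3) ^ 2 * (N + 4)) := by
    simp only [hankelForm₃, Nat.cast_ofNat, Nat.cast_zero, Nat.cast_one, add_zero]
    field_simp
    ring
  rw [hLDL]
  positivity

noncomputable def tWeights (x : ℝ) (n : ℕ) : ℝ :=
  if n = 0 then Real.sqrt (1 / 2)
  else if n = 1 then Real.sqrt x
  else Real.sqrt ((n + 1) / (n + 2))

section
variable {x : ℝ}

lemma gam_tWeights_zero : gam (tWeights x) 0 = 1 := Finset.prod_range_zero _

lemma gam_tWeights_one : gam (tWeights x) 1 = 1 / 2 := by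
  simp [gam, tWeights]

lemma gam_tWeights_add_two (hx : 0 ≤ x) (m : ℕ) :
    gam (tWeights x) (m + 2) = 3 * x / 2 / (m + 3) := by
  induction m with
  | zero =>
    rw [gam_succ, gam_tWeights_one]
    simp only [tWeights, one_ne_zero, ↓reduceIte, Real.sq_sqrt hx, Nat.cast_zero, zero_add]
    ring
  | succ m ih =>
    rw [show m + 1 + 2 = m + 2 + 1 by ring, gam_succ, ih, tWeights,
      if_neg (by omega), if_neg (by omega), Real.sq_sqrt (by positivity)]
    push_cast
    field_simp
    ring

lemma hankelForm₃_tWeights_zero (hx : 0 ≤ x) (a b c : ℝ) :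
    hankelForm₃ (fun k => gam (tWeights x) (0 + k)) a b c
      = a ^ 2 + a * b + x / 2 * (2 * a * c + b ^ 2) + 3 * x / 4 * b * c + 3 * x / 10 * c ^ 2 := by
  simp only [hankelForm₃, zero_add, gam_tWeights_zero, gam_tWeights_one, gam_tWeights_add_two hx]
  norm_num
  ring

lemma hankelForm₃_tWeights_one (hx : 0 ≤ x) (a b c : ℝ) :
    hankelForm₃ (fun k => gam (tWeights x) (1 + k)) a b c
      = a ^ 2 / 2 + x * a * b + 3 * x / 8 * (2 * a * c + b ^ 2) + 3 * x / 5 * b * c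
        + x / 4 * c ^ 2 := by
  simp only [hankelForm₃, add_zero, gam_tWeights_one, gam_tWeights_add_two hx]
  norm_num
  ring

lemma hankelForm₃_tWeights_zero_nonneg_iff (hx : 0 < x) :
    (∀ a b c, 0 ≤ hankelForm₃ (fun k => gam (tWeights x) (0 + k)) a b c) ↔
      40 * x ^ 2 - 63 * x + 24 ≤ 0 := by
  simp only [hankelForm₃_tWeights_zero hx.le]
  constructor
  · intro h
    -- `h₁` makes the leading minor positive; the vector of `h₂` is a multiple of the last column
    -- of the adjugate, so `h₂` says that this minor times the determinant is nonnegative.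
    have h₁ := h 6 (-12) 5
    have h₂ := h (3 * x - 4 * x ^ 2) (-2 * x) (8 * x - 4)
    have hminor : 0 < x * (x / 2 - 1 / 4) := mul_pos hx (by nlinarith)
    nlinarith
  · intro hq a b c
    have hx' : 51 / 80 ≤ x := by nlinarith
    nlinarith [sq_nonneg (a + b / 2 + x / 2 * c), sq_nonneg ((x / 2 - 1 / 4) * b + x / 8 * c),
      mul_nonneg (mul_nonneg hx.le (neg_nonneg.2 hq)) (sq_nonneg c), sq_nonneg b, sq_nonneg c]

lemma hankelForm₃_tWeights_one_nonneg_iff (hx : 0 < x) :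
    (∀ a b c, 0 ≤ hankelForm₃ (fun k => gam (tWeights x) (1 + k)) a b c) ↔ x ≤ 24 / 35 := by
  simp only [hankelForm₃_tWeights_one hx.le]
  constructor
  · intro h
    have h₁ := h x (-1) 0
    have h₂ := h 30 (-40) 3
    -- a multiple of the last column of the adjugate, as for `A(0;2)`
    have h₃ := h (3 * x ^ 2) (60 * x ^ 2 - 48 * x) (60 * x - 80 * x ^ 2)
    have hx34 : x < 3 / 4 := by nlinarith
    have hminor : 0 < x ^ 3 * (3 - 4 * x) := mul_pos (pow_pos hx 3) (by linarith)
    nlinarith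
  · intro hx' a b c
    have hminor : 0 < 3 * x / 16 - x ^ 2 / 4 := by nlinarith
    nlinarith [sq_nonneg (a / 2 + x / 2 * b + 3 * x / 8 * c),
      sq_nonneg ((3 * x / 16 - x ^ 2 / 4) * b + (3 * x / 20 - 3 * x ^ 2 / 16) * c),
      mul_nonneg (mul_nonneg (sq_nonneg x) (by linarith : (0 : ℝ) ≤ 24 - 35 * x)) (sq_nonneg c)]


lemma hankelForm₃_tWeights_add_two_nonneg (hx : 0 ≤ x) (n : ℕ) (a b c : ℝ) :
    0 ≤ hankelForm₃ (fun k => gam (tWeights x) (n + 2 + k)) a b c := by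
  have hmoments : (fun k => gam (tWeights x) (n + 2 + k)) =
      fun k : ℕ => 3 * x / 2 * (1 / ((n + 3 : ℝ) + k)) := by
    funext k
    rw [show n + 2 + k = n + k + 2 by omega, gam_tWeights_add_two hx]
    push_cast
    ring
  rw [hmoments, hankelForm₃_const_mul]
  exact mul_nonneg (by positivity) (hankelForm₃_inv_nonneg (by positivity) a b c)

end

lemma quadratic_nonpos_iff (x : ℝ) :
    40 * x ^ 2 - 63 * x + 24 ≤ 0 ↔
      (63 - Real.sqrt 129) / 80 ≤ x ∧ x ≤ (63 + Real.sqrt 129) / 80 := by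
  have hsq : Real.sqrt 129 ^ 2 = 129 := Real.sq_sqrt (by norm_num)
  have hfactor : 40 * x ^ 2 - 63 * x + 24 =
      40 * (x - (63 - Real.sqrt 129) / 80) * (x - (63 + Real.sqrt 129) / 80) := by
    linear_combination hsq / 160
  rw [hfactor]
  constructor
  · intro h
    have hs := Real.sqrt_nonneg 129
    constructor <;> nlinarith
  · rintro ⟨hlo, hhi⟩
    nlinarith

theorem stmt_3 (x : ℝ) (hx : 0 < x) :
    KHyponormal 2 (fun n =>
      if n = 0 then Real.sqrt (1 / 2)
      else if n = 1 then Real.sqrt x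
      else Real.sqrt ((n + 1) / (n + 2))) ↔
    (63 - Real.sqrt 129) / 80 ≤ x ∧ x ≤ 24 / 35 := by
  change KHyponormal 2 (tWeights x) ↔ _
  have hroot : (24 / 35 : ℝ) ≤ (63 + Real.sqrt 129) / 80 := by
    have hs := Real.sqrt_nonneg 129
    linarith
  rw [kHyponormal_two_iff]
  constructor
  · intro h
    exact ⟨((quadratic_nonpos_iff x).1 ((hankelForm₃_tWeights_zero_nonneg_iff hx).1 (h 0))).1,
      (hankelForm₃_tWeights_one_nonneg_iff hx).1 (h 1)⟩
  · rintro ⟨hlo, hhi⟩ (_ | _ | n)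
    · exact (hankelForm₃_tWeights_zero_nonneg_iff hx).2
        ((quadratic_nonpos_iff x).2 ⟨hlo, hhi.trans hroot⟩)
    · exact (hankelForm₃_tWeights_one_nonneg_iff hx).2 hhi
    · exact hankelForm₃_tWeights_add_two_nonneg hx.le n
end

section
/- Let $\alpha$ be a positive weight sequence, $k \ge 1$, $j \ge 0$, and for $x > 0$ let $\alpha^{(j)}(x)$ denote the sequence obtained from $\alpha$ by replacing $\alpha_j$ with $x$. Then the set $\Omega_\alpha^{k,j} = \{x > 0 : W_{\alpha^{(j)}(x)} \text{ is } k\text{-hyponormal}\}$ is convex (an interval). -/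
/-! Each moment of `α^{(j)}(x)` is an affine function of `x²`, so every Hankel matrix of
`α^{(j)}(x)` is affine in `x²`. If `x` lies between `y, z > 0`, then `x²` lies between `y²`
and `z²`, so the Hankel matrices at `x` are convex combinations of those at `y` and `z`;
positive semidefinite matrices form a convex cone. -/

lemma gam_update (α : ℕ → ℝ) (j : ℕ) (x : ℝ) (m : ℕ) :
    gam (Function.update α j x) m =
      if j < m then x ^ 2 * ∏ i ∈ (Finset.range m).erase j, α i ^ 2 else gam α m := by
  unfold gam
  split_ifs with hjm
  · rw [← Finset.mul_prod_erase _ _ (Finset.mem_range.2 hjm), Function.update_self]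
    congr 1
    exact Finset.prod_congr rfl fun i hi => by
      rw [Function.update_of_ne (Finset.ne_of_mem_erase hi)]
  · exact Finset.prod_congr rfl fun i hi => by
      rw [Function.update_of_ne (by have := Finset.mem_range.1 hi; omega)]

lemma gam_update_eq_add {α : ℕ → ℝ} {j : ℕ} {x y z c d : ℝ} (hcd : c + d = 1)
    (hx : x ^ 2 = c * y ^ 2 + d * z ^ 2) (m : ℕ) :
    gam (Function.update α j x) m =
      c * gam (Function.update α j y) m + d * gam (Function.update α j z) m := by
  simp only [gam_update]
  split_ifs
  · linear_combination (∏ i ∈ (Finset.range m).erase j, α i ^ 2) * hx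
  · linear_combination -gam α m * hcd

lemma KHyponormal.of_gam_eq_add {k : ℕ} {α β γ : ℕ → ℝ} {c d : ℝ}
    (hβ : KHyponormal k β) (hγ : KHyponormal k γ) (hc : 0 ≤ c) (hd : 0 ≤ d)
    (h : ∀ m, gam α m = c * gam β m + d * gam γ m) : KHyponormal k α := by
  intro n
  have hmat : (Matrix.of fun i j : Fin (k + 1) => gam α (n + i + j)) =
      c • (Matrix.of fun i j : Fin (k + 1) => gam β (n + i + j)) +
        d • (Matrix.of fun i j : Fin (k + 1) => gam γ (n + i + j)) := by
    ext i j
    simp [h]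
  rw [hmat]
  exact ((hβ n).smul hc).add ((hγ n).smul hd)

lemma sq_mem_segment_sq {x y z : ℝ} (hy : 0 ≤ y) (hz : 0 ≤ z) (hx : x ∈ segment ℝ y z) :
    x ^ 2 ∈ segment ℝ (y ^ 2) (z ^ 2) := by
  rw [segment_eq_uIcc] at hx ⊢
  have hmono : MonotoneOn (fun t : ℝ => t ^ 2) (Set.uIcc y z) :=
    pow_left_monotoneOn.mono fun t ht => le_trans (le_min hy hz) ht.1
  exact hmono.image_uIcc_subset ⟨x, hx, rfl⟩

theorem stmt_15_general (α : ℕ → ℝ) (k : ℕ) (j : ℕ) :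
    Convex ℝ {x : ℝ | 0 < x ∧ KHyponormal k (Function.update α j x)} := by
  rintro y ⟨hy, hαy⟩ z ⟨hz, hαz⟩ a b ha hb hab
  obtain ⟨c, d, hc, hd, hcd, hsq⟩ :=
    sq_mem_segment_sq hy.le hz.le ⟨a, b, ha, hb, hab, rfl⟩
  refine ⟨convex_Ioi (0 : ℝ) hy hz ha hb hab, hαy.of_gam_eq_add hαz hc hd (gam_update_eq_add hcd ?_)⟩
  simpa using hsq.symm

theorem stmt_15 (α : ℕ → ℝ) (hpos : ∀ n, 0 < α n) (hbdd : BddAbove (Set.range α))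
    (k : ℕ) (hk : 1 ≤ k) (j : ℕ) (hα : KHyponormal k α) :
    Convex ℝ {x : ℝ | 0 < x ∧ KHyponormal k (Function.update α j x)} :=
  stmt_15_general α k j
end

section
/- Let $0 < a < b < c$ and let $\alpha=\{\alpha_n\}$ be the weight sequence recursively generated by $\sqrt{a},\sqrt{b},\sqrt{c}$, i.e., $\alpha_0^2=a$, $\alpha_1^2=b$, $\alpha_2^2=c$, and $\alpha_{n+1}^2 = \varphi_1 + \varphi_0/\alpha_n^2$ with $\varphi_0 = -\frac{ab(c-b)}{b-a}$ and $\varphi_1 = \frac{b(c-a)}{b-a}$. For $x > 0$ let $T_x$ be the weighted shift with weights $\sqrt{x},\alpha_1,\alpha_2,\dots$ (zeroth weight replaced by $\sqrt{x}$). Then $T_x$ is 2-hyponormal if and only if $x \le a$. -/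
open Finset Matrix

/-- The moment sequence of the finitely atomic measure `∑ l, w l • δ (t l)`. -/
noncomputable def atomicMoments {ι : Type*} [Fintype ι] (w t : ι → ℝ) (n : ℕ) : ℝ :=
  ∑ l, w l * t l ^ n

lemma dotProduct_hankel_mulVec {ι : Type*} [Fintype ι] (w t : ι → ℝ) (k n : ℕ)
    (v : Fin (k + 1) → ℝ) :
    v ⬝ᵥ (of fun i j : Fin (k + 1) => atomicMoments w t (n + i + j)) *ᵥ v =
      ∑ l, w l * t l ^ n * (∑ i, v i * t l ^ (i : ℕ)) ^ 2 := by
  simp only [atomicMoments, dotProduct, mulVec, of_apply, sq, mul_sum, sum_mul]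
  conv_rhs => rw [sum_comm]; enter [2, j]; rw [sum_comm]
  rw [sum_comm (γ := Fin (k + 1))]
  refine sum_congr rfl fun i _ => sum_congr rfl fun j _ => sum_congr rfl fun l _ => ?_
  rw [pow_add, pow_add]
  ring

lemma kHyponormal_iff_of_gam_eq_atomicMoments {ι : Type*} [Fintype ι] {α : ℕ → ℝ}
    {w t : ι → ℝ} (h : gam α = atomicMoments w t) (k : ℕ) :
    KHyponormal k α ↔
      ∀ n (v : Fin (k + 1) → ℝ), 0 ≤ ∑ l, w l * t l ^ n * (∑ i, v i * t l ^ (i : ℕ)) ^ 2 := by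
  simp only [KHyponormal, h, posSemidef_iff_dotProduct_mulVec, star_trivial,
    dotProduct_hankel_mulVec]
  refine forall_congr' fun n => and_iff_right ?_
  ext i j
  simp only [conjTranspose_apply, of_apply, star_trivial, add_right_comm]

lemma atomicMoments_add_two (ρ s : Fin 2 → ℝ) (n : ℕ) :
    atomicMoments ρ s (n + 2) =
      (s 0 + s 1) * atomicMoments ρ s (n + 1) - s 0 * s 1 * atomicMoments ρ s n := by
  simp only [atomicMoments, Fin.sum_univ_two]
  ring

lemma atomicMoments_pos {ι : Type*} [Fintype ι] [Nonempty ι] {w t : ι → ℝ}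
    (hw : ∀ l, 0 < w l) (ht : ∀ l, 0 < t l) (n : ℕ) : 0 < atomicMoments w t n :=
  sum_pos (fun l _ => mul_pos (hw l) (pow_pos (ht l) n)) univ_nonempty

lemma gam_succ_eq_of_sq_mul {α G : ℕ → ℝ} {r : ℝ} (h₀ : α 0 ^ 2 = r * G 1)
    (h : ∀ n, α (n + 1) ^ 2 * G (n + 1) = G (n + 2)) (n : ℕ) :
    gam α (n + 1) = r * G (n + 1) := by
  induction n with
  | zero => simp [gam, h₀]
  | succ n ih => rw [gam, prod_range_succ, ← gam, ih, mul_assoc, mul_comm (G _), h]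

lemma exists_roots_around_of_quadratic_neg {p q a : ℝ} (ha : 0 < a) (hq : 0 < q)
    (h : a ^ 2 - p * a + q < 0) :
    ∃ s₀ s₁ : ℝ, 0 < s₀ ∧ s₀ < a ∧ a < s₁ ∧ s₀ + s₁ = p ∧ s₀ * s₁ = q := by
  have hD : (2 * a - p) ^ 2 < p ^ 2 - 4 * q := by nlinarith
  have hsq : √(p ^ 2 - 4 * q) ^ 2 = p ^ 2 - 4 * q :=
    Real.sq_sqrt (by nlinarith [sq_nonneg (2 * a - p)])
  obtain ⟨h₁, h₂⟩ :=
    abs_lt.mp <| Real.sqrt_sq_eq_abs (2 * a - p) ▸ Real.sqrt_lt_sqrt (sq_nonneg _) hD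
  have hprod : (p - √(p ^ 2 - 4 * q)) / 2 * ((p + √(p ^ 2 - 4 * q)) / 2) = q := by
    linear_combination (-1 / 4 : ℝ) * hsq
  exact ⟨_, _, pos_of_mul_pos_left (hprod ▸ hq) (by linarith), by linarith, by linarith,
    by ring, hprod⟩

lemma exists_pos_weights_of_lt_of_lt {s₀ s₁ a : ℝ} (h₀ : s₀ < a) (h₁ : a < s₁) :
    ∃ ρ₀ ρ₁ : ℝ, 0 < ρ₀ ∧ 0 < ρ₁ ∧ ρ₀ + ρ₁ = 1 ∧ ρ₀ * s₀ + ρ₁ * s₁ = a := by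
  have h : 0 < s₁ - s₀ := by linarith
  refine ⟨(s₁ - a) / (s₁ - s₀), (a - s₀) / (s₁ - s₀), div_pos (by linarith) h,
    div_pos (by linarith) h, ?_, ?_⟩ <;> field_simp <;> ring

lemma mul_eq_of_ratio_recurrence {G u : ℕ → ℝ} {p q : ℝ} (hG : ∀ n, 0 < G n)
    (hGrec : ∀ n, G (n + 2) = p * G (n + 1) - q * G n)
    (hu : ∀ n, 2 ≤ n → u (n + 1) = p - q / u n)
    (h₁ : u 1 * G 1 = G 2) (h₂ : u 2 * G 2 = G 3) (n : ℕ) :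
    u (n + 1) * G (n + 1) = G (n + 2) := by
  suffices ∀ n, u (n + 2) * G (n + 2) = G (n + 3) by
    rcases n with _ | n
    exacts [h₁, this n]
  intro n
  induction n with
  | zero => exact h₂
  | succ n ih =>
    have hu₀ : u (n + 2) ≠ 0 := by
      rintro h
      rw [h, zero_mul] at ih
      exact (hG _).ne' ih.symm
    rw [hu (n + 2) (by omega), hGrec (n + 2), ← ih]
    field_simp

lemma gam_eq_atomicMoments_of_sq_mul {α : ℕ → ℝ} {ρ s : Fin 2 → ℝ} {a x : ℝ} (ha : a ≠ 0)
    (hx : α 0 ^ 2 = x) (hG₀ : atomicMoments ρ s 0 = 1) (hG₁ : atomicMoments ρ s 1 = a)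
    (h : ∀ n, α (n + 1) ^ 2 * atomicMoments ρ s (n + 1) = atomicMoments ρ s (n + 2)) :
    gam α = atomicMoments ![1 - x / a, x / a * ρ 0, x / a * ρ 1] ![0, s 0, s 1] := by
  funext m
  rcases m with _ | m
  · simp only [gam, atomicMoments, Fin.sum_univ_two, Fin.sum_univ_three, Matrix.cons_val,
      pow_zero, mul_one] at hG₀ ⊢
    linear_combination (-(x / a)) * hG₀
  · rw [gam_succ_eq_of_sq_mul (r := x / a) (by rw [hx, hG₁, div_mul_cancel₀ x ha]) h m]
    simp only [atomicMoments, Fin.sum_univ_two, Fin.sum_univ_three, Matrix.cons_val,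
      zero_pow (Nat.add_one_ne_zero m), mul_zero, zero_add]
    ring

/-- The atoms are the roots of `t² = φ₁ t + φ₀`; they lie on either side of `a`, which makes
both weights positive. -/
lemma exists_atomicMoments_of_recursivelyGenerated {a b c : ℝ} (ha : 0 < a) (hab : a < b)
    (hbc : b < c) {u : ℕ → ℝ} (h1 : u 1 = b) (h2 : u 2 = c)
    (hrec : ∀ n, 2 ≤ n →
      u (n + 1) = b * (c - a) / (b - a) + (-(a * b * (c - b) / (b - a))) / u n) :
    ∃ ρ s : Fin 2 → ℝ, (∀ l, 0 < ρ l) ∧ (∀ l, 0 < s l) ∧ atomicMoments ρ s 0 = 1 ∧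
      atomicMoments ρ s 1 = a ∧
      ∀ n, u (n + 1) * atomicMoments ρ s (n + 1) = atomicMoments ρ s (n + 2) := by
  set p := b * (c - a) / (b - a)
  set q := a * b * (c - b) / (b - a)
  have hba : b - a ≠ 0 := (sub_pos.2 hab).ne'
  have hq : 0 < q := div_pos (mul_pos (mul_pos ha (ha.trans hab)) (sub_pos.2 hbc)) (sub_pos.2 hab)
  have hpa : p * a - q = a * b := by simp only [p, q]; field_simp; ring
  have hpb : p * b - q = b * c := by simp only [p, q]; field_simp; ring
  obtain ⟨s₀, s₁, hs₀, hs₀a, has₁, hsum, hprod⟩ :=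
    exists_roots_around_of_quadratic_neg ha hq (by nlinarith : a ^ 2 - p * a + q < 0)
  obtain ⟨ρ₀, ρ₁, hρ₀, hρ₁, hρ, hρa⟩ := exists_pos_weights_of_lt_of_lt hs₀a has₁
  have hρ' : ∀ l : Fin 2, 0 < ![ρ₀, ρ₁] l := Fin.forall_fin_two.2 ⟨hρ₀, hρ₁⟩
  have hs' : ∀ l : Fin 2, 0 < ![s₀, s₁] l := Fin.forall_fin_two.2 ⟨hs₀, ha.trans has₁⟩
  set G := atomicMoments ![ρ₀, ρ₁] ![s₀, s₁]
  have hGrec : ∀ n, G (n + 2) = p * G (n + 1) - q * G n := by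
    simpa [hsum, hprod] using atomicMoments_add_two ![ρ₀, ρ₁] ![s₀, s₁]
  have hG₀ : G 0 = 1 := by simpa [G, atomicMoments] using hρ
  have hG₁ : G 1 = a := by simpa [G, atomicMoments] using hρa
  have hG₂ : G 2 = a * b := by rw [hGrec, hG₁, hG₀, mul_one, hpa]
  have hG₃ : G 3 = a * b * c := by rw [hGrec, hG₂, hG₁]; linear_combination a * hpb
  refine ⟨_, _, hρ', hs', hG₀, hG₁, mul_eq_of_ratio_recurrence (G := G)
    (atomicMoments_pos hρ' hs') hGrec (fun n hn => by rw [hrec n hn]; ring)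
    (by rw [h1, hG₁, hG₂]; ring) (by rw [h2, hG₂, hG₃]; ring)⟩

theorem stmt_18_general (a b c : ℝ) (ha : 0 < a) (hab : a < b) (hbc : b < c)
    (αsq : ℕ → ℝ) (h1 : αsq 1 = b) (h2 : αsq 2 = c)
    (hrec : ∀ n, 2 ≤ n →
      αsq (n + 1) = b * (c - a) / (b - a) + (-(a * b * (c - b) / (b - a))) / αsq n)
    (x : ℝ) (hx : 0 < x) :
    KHyponormal 2 (fun k => if k = 0 then Real.sqrt x else Real.sqrt (αsq k)) ↔ x ≤ a := by
  obtain ⟨ρ, s, hρ, hs, hG₀, hG₁, hαG⟩ :=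
    exists_atomicMoments_of_recursivelyGenerated ha hab hbc h1 h2 hrec
  have hαsq : ∀ n, 0 ≤ αsq (n + 1) := fun n =>
    (pos_of_mul_pos_left ((hαG n).symm ▸ atomicMoments_pos hρ hs _)
      (atomicMoments_pos hρ hs _).le).le
  have hmom := gam_eq_atomicMoments_of_sq_mul (x := x)
    (α := fun k => if k = 0 then √x else √(αsq k)) ha.ne' (by simp [Real.sq_sqrt hx.le]) hG₀ hG₁
    fun n => by simp only [Nat.add_one_ne_zero, if_false, Real.sq_sqrt (hαsq n), hαG]
  rw [kHyponormal_iff_of_gam_eq_atomicMoments hmom]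
  constructor
  · intro h
    have hvanish : ∀ t, ∑ i, ![s 0 * s 1, -(s 0 + s 1), 1] i * t ^ (i : ℕ) =
        (t - s 0) * (t - s 1) := fun t => by
      simp only [Fin.sum_univ_three, Matrix.cons_val, Fin.val_zero, Fin.val_one, Fin.val_two]
      ring
    have hform := h 0 ![s 0 * s 1, -(s 0 + s 1), 1]
    simp only [hvanish] at hform
    simpa [Fin.sum_univ_three, div_le_one ha,
      mul_nonneg_iff_of_pos_right (pow_pos (mul_pos (hs 0) (hs 1)) 2)] using hform
  · intro hxa n v
    have hw : ∀ l, 0 ≤ x / a * ρ l := fun l => mul_nonneg (by positivity) (hρ l).le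
    refine sum_nonneg fun l _ => mul_nonneg (mul_nonneg ?_ (pow_nonneg ?_ n)) (sq_nonneg _) <;>
      fin_cases l <;> simp [(div_le_one ha).2 hxa, hw, (hs _).le]

theorem stmt_18 (a b c : ℝ) (ha : 0 < a) (hab : a < b) (hbc : b < c)
    (αsq : ℕ → ℝ) (h0 : αsq 0 = a) (h1 : αsq 1 = b) (h2 : αsq 2 = c)
    (hrec : ∀ n, 2 ≤ n →
      αsq (n + 1) = b * (c - a) / (b - a) + (-(a * b * (c - b) / (b - a))) / αsq n)
    (x : ℝ) (hx : 0 < x) :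
    KHyponormal 2 (fun k => if k = 0 then Real.sqrt x else Real.sqrt (αsq k)) ↔ x ≤ a :=
  stmt_18_general a b c ha hab hbc αsq h1 h2 hrec x hx
end
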